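/- arXiv:1902.04381 — 6 statements merged into one kernel-verified Lean document; each statement's English description precedes it below -/
import Mathlib

section
/- Let ℤ_q = W(𝔽_q) be the ring of Witt vectors of 𝔽_q. If f, g : ℤ_q → ℤ_q are ring homomorphisms such that f(x) ≡ g(x) (mod p) for all x ∈ ℤ_q, then f = g. -/
/-!
Every `x ∈ W(k)` over a perfect ring `k` is `y ^ p + p * z`. So if `f` and `g` agree modulo
`p ^ (m + 1)` on all elements, then `f y ^ p` and `g y ^ p` agree modulo `p ^ (m + 2)`, and hence
so do `f x` and `g x`. Thus `f x - g x` is divisible by every power of `p`, and it vanishes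
because `W(k)` is `p`-adically separated.
-/

theorem pow_dvd_pow_sub_pow_of_pow_dvd_sub {R : Type*} [CommRing R] {p m : ℕ} {a b : R}
    (h : (p : R) ^ (m + 1) ∣ a - b) : (p : R) ^ (m + 2) ∣ a ^ p - b ^ p := by
  rw [← geom_sum₂_mul, pow_succ']
  exact mul_dvd_mul (dvd_geom_sum₂_self ((dvd_pow_self _ m.succ_ne_zero).trans h)) h

theorem IsHausdorff.eq_of_forall_pow_dvd_sub {R : Type*} [CommRing R] {π : R}
    [IsHausdorff (Ideal.span {π}) R] {x y : R} (h : ∀ n, π ^ n ∣ x - y) : x = y := by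
  rw [IsHausdorff.eq_iff_smodEq (I := Ideal.span {π})]
  intro n
  simpa [SModEq.sub_mem, Ideal.span_singleton_pow, Ideal.mem_span_singleton] using h n

namespace RingHom

variable {A B : Type*} [CommRing A] [CommRing B] {p : ℕ}

theorem pow_succ_dvd_sub_of_dvd_sub (hA : ∀ x : A, ∃ y, (p : A) ∣ x - y ^ p) {f g : A →+* B}
    (h : ∀ x, (p : B) ∣ f x - g x) (m : ℕ) (x : A) : (p : B) ^ (m + 1) ∣ f x - g x := by
  induction m generalizing x with
  | zero => simpa using h x
  | succ m ih =>
    obtain ⟨y, z, hz⟩ := hA x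
    obtain rfl : x = y ^ p + p * z := by linear_combination hz
    have hfg : f (y ^ p + p * z) - g (y ^ p + p * z) = (f y ^ p - g y ^ p) + p * (f z - g z) := by
      simp only [map_add, map_mul, map_pow, map_natCast]
      ring
    rw [hfg]
    refine dvd_add (pow_dvd_pow_sub_pow_of_pow_dvd_sub (ih y)) ?_
    rw [pow_succ']
    exact mul_dvd_mul_left _ (ih z)

theorem eq_of_forall_dvd_sub [IsHausdorff (Ideal.span {(p : B)}) B]
    (hA : ∀ x : A, ∃ y, (p : A) ∣ x - y ^ p) {f g : A →+* B} (h : ∀ x, (p : B) ∣ f x - g x) :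
    f = g :=
  RingHom.ext fun x => IsHausdorff.eq_of_forall_pow_dvd_sub fun
    | 0 => by simp
    | m + 1 => pow_succ_dvd_sub_of_dvd_sub hA h m x

end RingHom

theorem WittVector.exists_p_dvd_sub_pow {p : ℕ} [Fact p.Prime] {k : Type*} [CommRing k]
    [CharP k p] [PerfectRing k p] (x : WittVector p k) : ∃ y, (p : WittVector p k) ∣ x - y ^ p := by
  obtain ⟨y, hy⟩ :=
    WittVector.constantCoeff_surjective p ((_root_.frobeniusEquiv k p).symm (x.coeff 0))
  refine ⟨y, ?_⟩
  rw [← Ideal.mem_span_singleton, ← WittVector.ker_constantCoeff, RingHom.mem_ker, map_sub,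
    map_pow, hy, WittVector.constantCoeff_apply, frobeniusEquiv_symm_pow_p, sub_self]

theorem stmt1_general (p n : ℕ) [Fact p.Prime]
    (f g : WittVector p (GaloisField p n) →+* WittVector p (GaloisField p n))
    (h : ∀ x, f x - g x ∈ Ideal.span {(p : WittVector p (GaloisField p n))}) :
    f = g :=
  RingHom.eq_of_forall_dvd_sub WittVector.exists_p_dvd_sub_pow
    fun x => Ideal.mem_span_singleton.mp (h x)

/-- If two ring endomorphisms of `ℤ_q = W(𝔽_q)` agree modulo `p`, they are equal. -/
theorem stmt1 (p n : ℕ) [Fact p.Prime] (hn : 0 < n)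
    (f g : WittVector p (GaloisField p n) →+* WittVector p (GaloisField p n))
    (h : ∀ x, f x - g x ∈ Ideal.span {(p : WittVector p (GaloisField p n))}) :
    f = g :=
  stmt1_general p n f g h
end

section
/- Let q = p^n. Consider the ring homomorphism Θ : ℤ_q[𝔽_q^×] → 𝔽_q ⊗_{𝔽_p} 𝔽_q sending z·[λ] to λ ⊗ z̄, where z̄ is the reduction of z ∈ ℤ_q modulo p. For k ∈ {0, ..., n−1}, the image Θ(e_{p^k}) of the idempotent e_{p^k} = (q−1)^{-1} Σ_λ χ(λ)^{−p^k} [λ] is the primitive idempotent of 𝔽_q ⊗_{𝔽_p} 𝔽_q corresponding, under the isomorphism 𝔽_q ⊗_{𝔽_p} 𝔽_q ≅ ∏_{l=0}^{n−1} 𝔽_q given by x ⊗ y ↦ (x^{p^l} y)_l, to the standard idempotent of the k-th factor. -/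
/-!
In the `l`-th factor, `Θ(e_{p^k})` is `v̄ · ∑_λ λ^{p^l} λ^{-p^k}`, where `v̄ = (q-1)⁻¹ = -1` in `𝔽_q`.
The character sum `∑_λ λ^z` over `𝔽_q^×` is `-1` if `q - 1 ∣ z` and `0` otherwise, and
`q - 1 ∣ p^l - p^k` forces `l = k` because `|p^l - p^k| < p^n - 1` for `l, k < n`.
-/

open TensorProduct

/-- The isotypic idempotent `e_m = (q-1)⁻¹ ∑_{λ ∈ 𝔽_q^×} χ(λ)^{-m} [λ]` in the group
algebra `R[𝔽_q^×]`, where `χ` is a character `𝔽_q^× → ℤ_q^×` and `v = (q-1)⁻¹ ∈ R`. -/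
noncomputable def raynaudIdem (p n : ℕ) [Fact p.Prime] (R : Type*) [CommRing R]
    [Algebra (WittVector p (GaloisField p n)) R]
    (χ : (GaloisField p n)ˣ →* (WittVector p (GaloisField p n))ˣ) (v : R) (m : ℤ) :
    MonoidAlgebra R (GaloisField p n)ˣ :=
  ∑ᶠ lam : (GaloisField p n)ˣ,
    MonoidAlgebra.single lam
      (v * algebraMap (WittVector p (GaloisField p n)) R
        ((χ lam ^ (-m) : (WittVector p (GaloisField p n))ˣ) : WittVector p (GaloisField p n)))

namespace FiniteField

variable {K : Type*} [Field K] [Fintype K]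

theorem natCast_card_sub_one : ((Fintype.card K - 1 : ℕ) : K) = -1 := by
  rw [Nat.cast_sub Fintype.card_pos, cast_card_eq_zero, Nat.cast_one, zero_sub]

theorem map_eq_neg_one_of_mul_card_sub_one_eq_one {R : Type*} [Semiring R] (ρ : R →+* K) {v : R}
    (hv : v * ((Fintype.card K - 1 : ℕ) : R) = 1) : ρ v = -1 := by
  have := congrArg ρ hv
  rwa [map_mul, map_natCast, map_one, natCast_card_sub_one, mul_neg_one, neg_eq_iff_eq_neg] at this

variable (K) in
theorem sum_zpow_units [DecidableEq K] (z : ℤ) :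
    ∑ x : Kˣ, ((x ^ z : Kˣ) : K) = if ((Fintype.card K - 1 : ℕ) : ℤ) ∣ z then -1 else 0 := by
  set m : ℤ := ((Fintype.card K - 1 : ℕ) : ℤ)
  have hm : m ≠ 0 := by
    simp only [m, ← Fintype.card_units, Nat.cast_ne_zero]
    exact Fintype.card_ne_zero
  obtain ⟨i, hi⟩ := Int.eq_ofNat_of_zero_le (Int.emod_nonneg z hm)
  have hpow (x : Kˣ) : x ^ z = x ^ i := by
    rw [← zpow_mod_card, Fintype.card_units, hi, zpow_natCast]
  simp_rw [hpow, Units.val_pow_eq_pow_val]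
  rw [sum_pow_units]
  congr 1
  rw [← Int.natCast_dvd_natCast, ← hi, Int.dvd_iff_emod_eq_zero, Int.dvd_iff_emod_eq_zero,
    Int.emod_emod_of_dvd z dvd_rfl]

end FiniteField

theorem Int.sub_one_dvd_pow_sub_pow_iff {p n l k : ℕ} (hp : 1 < p) (hl : l < n) (hk : k < n) :
    (p : ℤ) ^ n - 1 ∣ (p : ℤ) ^ l - (p : ℤ) ^ k ↔ l = k := by
  refine ⟨fun h => ?_, fun h => by rw [h, sub_self]; exact dvd_zero _⟩
  have hp' : (1 : ℤ) < p := by exact_mod_cast hp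
  have bound (j : ℕ) (hj : j < n) : 1 ≤ (p : ℤ) ^ j ∧ (p : ℤ) ^ j ≤ (p : ℤ) ^ (n - 1) :=
    ⟨one_le_pow₀ hp'.le, pow_le_pow_right₀ hp'.le (Nat.le_sub_one_of_lt hj)⟩
  have htop : (p : ℤ) ^ (n - 1) < (p : ℤ) ^ n := pow_lt_pow_right₀ hp' (by omega)
  have hlt : |(p : ℤ) ^ l - (p : ℤ) ^ k| < (p : ℤ) ^ n - 1 := by
    obtain ⟨hl₁, hl₂⟩ := bound l hl
    obtain ⟨hk₁, hk₂⟩ := bound k hk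
    rw [abs_sub_lt_iff]
    constructor <;> linarith
  have hpow : (p : ℤ) ^ l = (p : ℤ) ^ k := sub_eq_zero.mp (Int.eq_zero_of_abs_lt_dvd h hlt)
  exact Nat.pow_right_injective hp (by exact_mod_cast hpow)

theorem map_val_zpow_eq_of_map_val_eq {R K F : Type*} [Monoid R] [Monoid K] [FunLike F R K]
    [MonoidHomClass F R K] (ρ : F) (χ : Kˣ →* Rˣ) (hχ : ∀ x, ρ (χ x) = x) (x : Kˣ) (m : ℤ) :
    ρ ((χ x ^ m : Rˣ) : R) = ((x ^ m : Kˣ) : K) := by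
  have hx : Units.map (ρ : R →* K) (χ x) = x := Units.ext (hχ x)
  have := congrArg Units.val (map_zpow (Units.map (ρ : R →* K)) (χ x) m)
  rwa [hx] at this

/-- Under the map `Θ : ℤ_q[𝔽_q^×] → 𝔽_q ⊗_{𝔽_p} 𝔽_q`, `z·[λ] ↦ λ ⊗ z̄`, the idempotent
`e_{p^k}` is sent to the primitive idempotent corresponding, under the isomorphism
`𝔽_q ⊗_{𝔽_p} 𝔽_q ≅ ∏_l 𝔽_q`, `x ⊗ y ↦ (x^{p^l} y)_l`, to the standard idempotent of the
`k`-th factor. -/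
theorem stmt5 (p n : ℕ) [Fact p.Prime] (hn : 0 < n)
    (χ : (GaloisField p n)ˣ →* (WittVector p (GaloisField p n))ˣ)
    (hχ : ∀ x : (GaloisField p n)ˣ,
      WittVector.ghostComponent 0 ((χ x : (WittVector p (GaloisField p n))ˣ) :
        WittVector p (GaloisField p n)) = (x : GaloisField p n))
    (v : WittVector p (GaloisField p n))
    (hv : v * ((p ^ n - 1 : ℕ) : WittVector p (GaloisField p n)) = 1)
    (e : (GaloisField p n ⊗[ZMod p] GaloisField p n) ≃+* (Fin n → GaloisField p n))
    (he : ∀ x y : GaloisField p n,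
      e (x ⊗ₜ[ZMod p] y) = fun l : Fin n => x ^ p ^ (l : ℕ) * y)
    (Θ : MonoidAlgebra (WittVector p (GaloisField p n)) (GaloisField p n)ˣ →+*
      (GaloisField p n ⊗[ZMod p] GaloisField p n))
    (hΘ : ∀ (lam : (GaloisField p n)ˣ) (z : WittVector p (GaloisField p n)),
      Θ (MonoidAlgebra.single lam z) =
        ((lam : GaloisField p n) ⊗ₜ[ZMod p] (WittVector.ghostComponent 0 z))) :
    ∀ k : Fin n,
      e (Θ (raynaudIdem p n (WittVector p (GaloisField p n)) χ v ((p : ℤ) ^ (k : ℕ)))) =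
        Pi.single k 1 := by
  classical
  intro k
  let : Fintype (GaloisField p n) := Fintype.ofFinite _
  have hcard : Fintype.card (GaloisField p n) = p ^ n := by
    rw [← Nat.card_eq_fintype_card, GaloisField.card p n hn.ne']
  rw [← hcard] at hv
  have hv₀ := FiniteField.map_eq_neg_one_of_mul_card_sub_one_eq_one (WittVector.ghostComponent 0) hv
  have hterm (lam : (GaloisField p n)ˣ) (l : Fin n) :
      e (Θ (MonoidAlgebra.single lam (v * ((χ lam ^ (-(p : ℤ) ^ (k : ℕ)) :
        (WittVector p (GaloisField p n))ˣ) : WittVector p (GaloisField p n))))) l =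
        -((lam ^ ((p : ℤ) ^ (l : ℕ) - (p : ℤ) ^ (k : ℕ)) : (GaloisField p n)ˣ) :
          GaloisField p n) := by
    rw [hΘ, he, map_mul, hv₀, map_val_zpow_eq_of_map_val_eq _ χ hχ, sub_eq_add_neg, zpow_add,
      Units.val_mul]
    dsimp only
    rw [← Nat.cast_pow (α := ℤ) p l, zpow_natCast, Units.val_pow_eq_pow_val]
    ring
  funext l
  rw [raynaudIdem, finsum_eq_sum_of_fintype, map_sum, map_sum, Finset.sum_apply]
  simp only [Algebra.algebraMap_self, RingHom.id_apply, hterm]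
  rw [Finset.sum_neg_distrib, FiniteField.sum_zpow_units, hcard,
    Nat.cast_sub (Nat.one_le_pow _ _ (Fact.out : p.Prime).pos), Nat.cast_pow, Nat.cast_one]
  simp only [Int.sub_one_dvd_pow_sub_pow_iff (Fact.out : p.Prime).one_lt l.isLt k.isLt,
    Fin.val_inj, Pi.single_apply]
  split_ifs <;> simp
end

section
/- Let R be a commutative ring, n ≥ 1, p ≥ 2, and a_0, a_1, ..., a_{n−1} ∈ R (indices taken mod n). Define A := R[x_0, ..., x_{n−1}] / (x_0^p − a_1 x_1, x_1^p − a_2 x_2, ..., x_{n−2}^p − a_{n−1} x_{n−1}, x_{n−1}^p − a_0 x_0). Then A is a free R-module of rank p^n, with basis the images of the monomials x_0^{r_0} x_1^{r_1} ⋯ x_{n−1}^{r_{n−1}} for 0 ≤ r_k ≤ p−1. -/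
/-!
Read `x_k ^ p ↦ b_k x_{s k}` as a rewriting rule on terms `c • x^e`. A step lowers the total
degree by `p - 1 ≥ 1`, and steps at two different variables can still be made in either order and
then meet, so by Church–Rosser every term has a unique normal form, which has all exponents `< p`.
Taking normal forms is therefore a well-defined `R`-linear map on `R[x]`; it kills the relation
ideal, since `m (x_k ^ p - b_k x_{s k})` is the difference of a term and its rewrite, and it fixes
reduced monomials, whence their classes are linearly independent. They span
because a rewriting step does not change the class of a term in the quotient.
For the cyclic relations `x_{k-1} ^ p = a_k x_k`, take `s k = k + 1` and `b k = a (k + 1)`.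
-/

open Relation
open Finsupp (single)

namespace MvPolynomial

variable {σ R : Type*} [CommRing R]

section Carry

variable (p : ℕ) (s : σ → σ) (b : σ → R)

/-- A pair `(e, c)` stands for the term `c • X^e`; a step replaces a factor `X k ^ p` by
`b k • X (s k)`. -/
def Carry (x y : (σ →₀ ℕ) × R) : Prop :=
  ∃ k, p ≤ x.1 k ∧ y = (x.1 - single k p + single (s k) 1, b k * x.2)

variable {p s b}

theorem Carry.exists_add_single {x y : (σ →₀ ℕ) × R} (h : Carry p s b x y) :
    ∃ e k, x = (e + single k p, x.2) ∧ y = (e + single (s k) 1, b k * x.2) := by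
  obtain ⟨k, hk, rfl⟩ := h
  exact ⟨_, k, by rw [tsub_add_cancel_of_le (Finsupp.single_le_iff.2 hk)], rfl⟩

theorem Carry.degree_lt (hp : 2 ≤ p) {x y : (σ →₀ ℕ) × R} (h : Carry p s b x y) :
    y.1.degree < x.1.degree := by
  obtain ⟨e, k, hx, rfl⟩ := h.exists_add_single
  rw [hx]
  simp only [map_add, Finsupp.degree_single]
  omega

theorem carry_diamond {x y z : (σ →₀ ℕ) × R} (hy : Carry p s b x y) (hz : Carry p s b x z) :
    ∃ w, ReflGen (Carry p s b) y w ∧ ReflTransGen (Carry p s b) z w := by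
  obtain ⟨j, hj, rfl⟩ := hy
  obtain ⟨k, hk, rfl⟩ := hz
  by_cases hjk : j = k
  · subst hjk
    exact ⟨_, .refl, .refl⟩
  refine ⟨(x.1 - single j p + single (s j) 1 - single k p
      + single (s k) 1, b k * (b j * x.2)), .single ⟨k, ?_, rfl⟩, .single ⟨j, ?_, ?_⟩⟩
  · rw [Finsupp.add_apply, Finsupp.tsub_apply, Finsupp.single_eq_of_ne' hjk]
    omega
  · rw [Finsupp.add_apply, Finsupp.tsub_apply, Finsupp.single_eq_of_ne' (Ne.symm hjk)]
    omega
  · classical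
    ext i
    · simp only [Finsupp.add_apply, Finsupp.tsub_apply, Finsupp.single_apply]
      split_ifs <;> subst_vars <;> first | omega | exact absurd rfl hjk
    · exact mul_left_comm _ _ _

theorem exists_reflTransGen_carry_lt (hp : 2 ≤ p) (x : (σ →₀ ℕ) × R) :
    ∃ y, ReflTransGen (Carry p s b) x y ∧ ∀ k, y.1 k < p := by
  induction hd : x.1.degree using Nat.strong_induction_on generalizing x with
  | _ d ih =>
  by_cases hx : ∀ k, x.1 k < p
  · exact ⟨x, .refl, hx⟩
  push Not at hx
  obtain ⟨k, hk⟩ := hx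
  have hxy : Carry p s b x _ := ⟨k, hk, rfl⟩
  obtain ⟨z, hyz, hz⟩ := ih _ (hd ▸ hxy.degree_lt hp) _ rfl
  exact ⟨z, .head hxy hyz, hz⟩

theorem eq_of_reflTransGen_carry {x y : (σ →₀ ℕ) × R} (h : ReflTransGen (Carry p s b) x y)
    (hx : ∀ k, x.1 k < p) : x = y := by
  rcases h.cases_head with rfl | ⟨z, ⟨k, hk, -⟩, -⟩
  · rfl
  · exact absurd (hx k) (not_lt.2 hk)

theorem eq_of_reflTransGen_carry_of_lt {x y z : (σ →₀ ℕ) × R}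
    (hy : ReflTransGen (Carry p s b) x y) (hz : ReflTransGen (Carry p s b) x z)
    (hy' : ∀ k, y.1 k < p) (hz' : ∀ k, z.1 k < p) :
    y = z := by
  obtain ⟨w, hyw, hzw⟩ := church_rosser (fun _ _ _ => carry_diamond) hy hz
  rw [eq_of_reflTransGen_carry hyw hy', eq_of_reflTransGen_carry hzw hz']

theorem reflTransGen_carry_mul {x y : (σ →₀ ℕ) × R} (h : ReflTransGen (Carry p s b) x y)
    (c : R) :
    ReflTransGen (Carry p s b) (x.1, c * x.2) (y.1, c * y.2) :=
  h.lift (fun x => (x.1, c * x.2)) fun _ _ ⟨k, hk, hxy⟩ =>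
    ⟨k, hk, by rw [hxy, mul_left_comm]⟩

theorem carry_add_single (e : σ →₀ ℕ) (k : σ) (c : R) :
    Carry p s b (e + single k p, c) (e + single (s k) 1, b k * c) :=
  ⟨k, by simp, by simp⟩

end Carry

section Quotient

variable (p : ℕ) (s : σ → σ) (b : σ → R)

noncomputable def carryIdeal : Ideal (MvPolynomial σ R) :=
  Ideal.span (Set.range fun k => X k ^ p - C (b k) * X (s k))

variable {p s b}

theorem monomial_mul_carry_relation (e : σ →₀ ℕ) (k : σ) (c : R) :
    monomial e c * (X k ^ p - C (b k) * X (s k))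
      = monomial (e + single k p) c - monomial (e + single (s k) 1) (b k * c) := by
  rw [mul_sub, X_pow_eq_monomial, monomial_mul, mul_one, ← mul_assoc,
    mul_comm (monomial e c), C_mul_monomial, X, monomial_mul, mul_one]

theorem mk_monomial_eq_of_carry {x y : (σ →₀ ℕ) × R} (h : Carry p s b x y) :
    Ideal.Quotient.mk (carryIdeal p s b) (monomial x.1 x.2)
      = Ideal.Quotient.mk (carryIdeal p s b) (monomial y.1 y.2) := by
  obtain ⟨e, k, hx, rfl⟩ := h.exists_add_single
  rw [hx, Ideal.Quotient.eq, ← monomial_mul_carry_relation]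
  exact Ideal.mul_mem_left _ _ (Ideal.subset_span ⟨k, rfl⟩)

theorem mk_monomial_eq_of_reflTransGen_carry {x y : (σ →₀ ℕ) × R}
    (h : ReflTransGen (Carry p s b) x y) :
    Ideal.Quotient.mk (carryIdeal p s b) (monomial x.1 x.2)
      = Ideal.Quotient.mk (carryIdeal p s b) (monomial y.1 y.2) := by
  induction h with
  | refl => rfl
  | tail _ hyz ih => exact ih.trans (mk_monomial_eq_of_carry hyz)

end Quotient

section NormalForm

variable {p : ℕ} (s : σ → σ) (b : σ → R) (hp : 2 ≤ p)

noncomputable def carryNormalForm (x : (σ →₀ ℕ) × R) : (σ →₀ ℕ) × R :=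
  (exists_reflTransGen_carry_lt (s := s) (b := b) hp x).choose

variable {s b}

theorem reflTransGen_carryNormalForm (x : (σ →₀ ℕ) × R) :
    ReflTransGen (Carry p s b) x (carryNormalForm s b hp x) :=
  (exists_reflTransGen_carry_lt hp x).choose_spec.1

theorem carryNormalForm_lt (x : (σ →₀ ℕ) × R) (k : σ) :
    (carryNormalForm s b hp x).1 k < p :=
  (exists_reflTransGen_carry_lt hp x).choose_spec.2 k

theorem carryNormalForm_eq {x y : (σ →₀ ℕ) × R} (h : ReflTransGen (Carry p s b) x y)
    (hy : ∀ k, y.1 k < p) : carryNormalForm s b hp x = y :=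
  eq_of_reflTransGen_carry_of_lt (reflTransGen_carryNormalForm hp x) h (carryNormalForm_lt hp x) hy

theorem carryNormalForm_eq_of_carry {x y : (σ →₀ ℕ) × R} (h : Carry p s b x y) :
    carryNormalForm s b hp x = carryNormalForm s b hp y :=
  carryNormalForm_eq hp (.head h (reflTransGen_carryNormalForm hp y)) (carryNormalForm_lt hp y)

theorem carryNormalForm_mul (e : σ →₀ ℕ) (c : R) :
    carryNormalForm s b hp (e, c)
      = ((carryNormalForm s b hp (e, 1)).1, c * (carryNormalForm s b hp (e, 1)).2) := by
  refine carryNormalForm_eq hp ?_ (carryNormalForm_lt hp _)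
  simpa using reflTransGen_carry_mul (reflTransGen_carryNormalForm hp (e, 1)) c

variable (s b)

noncomputable def carryReduce : MvPolynomial σ R →ₗ[R] MvPolynomial σ R :=
  (basisMonomials σ R).constr R fun e =>
    monomial (carryNormalForm s b hp (e, 1)).1 (carryNormalForm s b hp (e, 1)).2

variable {s b}

theorem carryReduce_monomial (e : σ →₀ ℕ) (c : R) :
    carryReduce s b hp (monomial e c)
      = monomial (carryNormalForm s b hp (e, c)).1 (carryNormalForm s b hp (e, c)).2 := by
  have h1 : carryReduce s b hp (monomial e 1)
      = monomial (carryNormalForm s b hp (e, 1)).1 (carryNormalForm s b hp (e, 1)).2 :=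
    (basisMonomials σ R).constr_basis R _ e
  have hc : monomial e c = c • monomial e (1 : R) := by rw [smul_monomial, smul_eq_mul, mul_one]
  rw [hc, map_smul, h1, smul_monomial, smul_eq_mul, carryNormalForm_mul hp e c]

theorem carryReduce_monomial_of_lt {e : σ →₀ ℕ} (he : ∀ k, e k < p) :
    carryReduce s b hp (monomial e 1) = monomial e 1 := by
  rw [carryReduce_monomial, carryNormalForm_eq hp .refl he]

theorem carryReduce_eq_zero {f : MvPolynomial σ R} (hf : f ∈ carryIdeal p s b) :
    carryReduce s b hp f = 0 := by
  suffices ∀ g, carryReduce s b hp (g * f) = 0 by simpa using this 1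
  induction hf using Submodule.span_induction with
  | mem _ hr =>
    obtain ⟨k, rfl⟩ := hr
    intro g
    induction g using MvPolynomial.induction_on' with
    | monomial e c =>
      rw [monomial_mul_carry_relation, map_sub, carryReduce_monomial, carryReduce_monomial,
        carryNormalForm_eq_of_carry hp (carry_add_single e k c), sub_self]
    | add g₁ g₂ h₁ h₂ => rw [add_mul, map_add, h₁, h₂, add_zero]
  | zero => simp
  | add f₁ f₂ _ _ h₁ h₂ => intro g; rw [mul_add, map_add, h₁, h₂, add_zero]
  | smul c f _ h => intro g; rw [smul_eq_mul, ← mul_assoc, h]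

end NormalForm

section Basis

variable {p : ℕ} (s : σ → σ) (b : σ → R)

theorem linearIndependent_mk_monomial_lt (hp : 2 ≤ p) :
    LinearIndependent R fun r : {e : σ →₀ ℕ // ∀ k, e k < p} =>
      Ideal.Quotient.mk (carryIdeal p s b) (monomial r.1 1) := by
  set v : {e : σ →₀ ℕ // ∀ k, e k < p} → MvPolynomial σ R := fun r => monomial r.1 1
  have hv : LinearIndependent R v :=
    (basisMonomials σ R).linearIndependent.comp Subtype.val Subtype.val_injective
  have hfix : carryReduce s b hp ∘ v = v := by
    funext r
    exact carryReduce_monomial_of_lt hp r.2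
  rw [linearIndependent_iff]
  intro l hl
  have hmem : Finsupp.linearCombination R v l ∈ carryIdeal p s b := by
    rw [← Ideal.Quotient.eq_zero_iff_mem, ← hl]
    exact Finsupp.apply_linearCombination R (Ideal.Quotient.mkₐ R _).toLinearMap v l
  refine linearIndependent_iff.1 hv l ?_
  rw [← hfix, ← Finsupp.apply_linearCombination, carryReduce_eq_zero hp hmem]

theorem span_mk_monomial_lt (hp : 2 ≤ p) :
    ⊤ ≤ Submodule.span R (Set.range fun r : {e : σ →₀ ℕ // ∀ k, e k < p} =>
      Ideal.Quotient.mk (carryIdeal p s b) (monomial r.1 1)) := by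
  rintro x -
  obtain ⟨f, rfl⟩ := Ideal.Quotient.mk_surjective x
  induction f using MvPolynomial.induction_on' with
  | monomial e c =>
    set y := carryNormalForm s b hp (e, c)
    have hy : monomial y.1 y.2 = y.2 • monomial y.1 (1 : R) := by
      rw [smul_monomial, smul_eq_mul, mul_one]
    rw [mk_monomial_eq_of_reflTransGen_carry (reflTransGen_carryNormalForm hp (e, c)), hy,
      ← Ideal.Quotient.mkₐ_eq_mk R, map_smul]
    exact Submodule.smul_mem _ _
      (Submodule.subset_span ⟨⟨y.1, carryNormalForm_lt hp _⟩, rfl⟩)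
  | add f g hf hg => rw [map_add]; exact add_mem hf hg

noncomputable def carryBasis (hp : 2 ≤ p) :
    Module.Basis {e : σ →₀ ℕ // ∀ k, e k < p} R (MvPolynomial σ R ⧸ carryIdeal p s b) :=
  .mk (linearIndependent_mk_monomial_lt s b hp) (span_mk_monomial_lt s b hp)

theorem carryBasis_apply (hp : 2 ≤ p) (r : {e : σ →₀ ℕ // ∀ k, e k < p}) :
    carryBasis s b hp r = Ideal.Quotient.mk (carryIdeal p s b) (monomial r.1 1) :=
  Module.Basis.mk_apply _ _ _

end Basis

section Fintype

variable [Fintype σ] {p : ℕ}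

noncomputable def finsuppLtEquiv : (σ → Fin p) ≃ {e : σ →₀ ℕ // ∀ k, e k < p} where
  toFun r := ⟨Finsupp.equivFunOnFinite.symm fun k => r k, fun k => (r k).isLt⟩
  invFun e k := ⟨e.1 k, e.2 k⟩
  left_inv _ := rfl
  right_inv _ := Subtype.ext (Finsupp.ext fun _ => rfl)

theorem exists_basis_quotient_carryIdeal (s : σ → σ) (b : σ → R) (hp : 2 ≤ p) :
    ∃ B : Module.Basis (σ → Fin p) R (MvPolynomial σ R ⧸ carryIdeal p s b),
      ∀ r : σ → Fin p,
        B r = Ideal.Quotient.mk (carryIdeal p s b) (∏ k, X k ^ (r k : ℕ)) := by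
  refine ⟨(carryBasis s b hp).reindex finsuppLtEquiv.symm, fun r => ?_⟩
  rw [Module.Basis.reindex_apply, Equiv.symm_symm, carryBasis_apply, monomial_eq, C_1, one_mul,
    Finsupp.prod_fintype _ _ fun _ => pow_zero _]
  rfl

end Fintype

end MvPolynomial

open MvPolynomial

/-- The algebra `A = R[x_0,…,x_{n-1}]/(x_{k-1}^p - a_k x_k, k = 0,…,n-1)` (indices mod `n`)
is a free `R`-module of rank `p^n`, with basis the images of the monomials
`x_0^{r_0} ⋯ x_{n-1}^{r_{n-1}}`, `0 ≤ r_k ≤ p-1`. -/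
theorem stmt6 (R : Type*) [CommRing R] (p n : ℕ) (hp : 2 ≤ p) [NeZero n]
    (a : Fin n → R) :
    ∃ B : Module.Basis (Fin n → Fin p) R
      (MvPolynomial (Fin n) R ⧸
        Ideal.span (Set.range fun k : Fin n => (X (k - 1)) ^ p - C (a k) * X k)),
      ∀ r : Fin n → Fin p,
        B r = Ideal.Quotient.mk
          (Ideal.span (Set.range fun k : Fin n => (X (k - 1)) ^ p - C (a k) * X k))
          (∏ k : Fin n, (X k) ^ ((r k : ℕ))) := by
  have hI : Ideal.span (Set.range fun k : Fin n => (X (k - 1)) ^ p - C (a k) * X k)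
      = carryIdeal p (· + 1) fun k => a (k + 1) := by
    have hshift : (fun k : Fin n => X (k - 1) ^ p - C (a k) * X k)
        = (fun k => X k ^ p - C (a (k + 1)) * X (k + 1)) ∘ Equiv.subRight 1 := by
      funext k
      simp
    rw [hshift, (Equiv.subRight 1).surjective.range_comp]
    rfl
  rw [hI]
  exact exists_basis_quotient_carryIdeal _ _ hp
end

section
/- Let R be a commutative ring, p ≥ 2, n ≥ 1, and a_0,...,a_{n−1} ∈ R all invertible. Set c := a_0 · a_{n−1}^p ⋯ a_1^{p^{n−1}} and A := R[x_0,...,x_{n−1}]/(x_0^p − a_1 x_1, ..., x_{n−1}^p − a_0 x_0). Then the R-algebra homomorphism R[t]/(t^{p^n} − c·t) → A sending t to x_0 is an isomorphism. -/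
/-!
Reading the indices modulo `n`, the relations of `A` say `x_j ^ p = a_{j+1} x_{j+1}` for all
`j : ℕ`, hence `w_j x_j = x_0 ^ p ^ j` for the weights `w_0 = 1`, `w_{j+1} = w_j ^ p a_{j+1}`.
Since `x_n = x_0` and `w_n = c`, this gives `x_0 ^ p ^ n = c x_0`. Conversely, in
`R[t]/(t ^ p ^ n - c t)` the elements `y_0 = t`, `y_{j+1} = a_{j+1}⁻¹ y_j ^ p` satisfy the same
relations, and `y_n = t` because `w_n y_n = t ^ p ^ n = c t` with `c = w_n` a unit. The two
homomorphisms so obtained are mutually inverse since, the `a_k` being units, a solution of the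
relations is determined by its value at `0`.
-/

open MvPolynomial

section PowWeight

variable {M : Type*} [CommMonoid M] (p : ℕ)

def powWeight (a : ℕ → M) : ℕ → M
  | 0 => 1
  | k + 1 => powWeight a k ^ p * a (k + 1)

theorem powWeight_eq_prod (a : ℕ → M) (k : ℕ) :
    powWeight p a k = ∏ i ∈ Finset.range k, a (i + 1) ^ p ^ (k - (i + 1)) := by
  induction k with
  | zero => rfl
  | succ k ih =>
    rw [powWeight, ih, Finset.prod_range_succ, ← Finset.prod_pow, Nat.sub_self, pow_zero, pow_one]
    congr 1
    refine Finset.prod_congr rfl fun i hi => ?_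
    rw [← pow_mul, ← pow_succ, Nat.sub_add_comm (Finset.mem_range.1 hi)]

theorem isUnit_powWeight {a : ℕ → M} (ha : ∀ j, IsUnit (a j)) (k : ℕ) :
    IsUnit (powWeight p a k) := by
  induction k with
  | zero => exact isUnit_one
  | succ k ih => exact (ih.pow p).mul (ha (k + 1))

variable {p}

theorem powWeight_mul_eq_pow_pow {a x : ℕ → M} (hx : ∀ j, x j ^ p = a (j + 1) * x (j + 1))
    (k : ℕ) : powWeight p a k * x k = x 0 ^ p ^ k := by
  induction k with
  | zero => rw [powWeight, one_mul, pow_zero, pow_one]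
  | succ k ih => rw [pow_succ, pow_mul, ← ih, mul_pow, hx, powWeight, mul_assoc]

theorem eq_of_pow_eq_mul {a x y : ℕ → M} (ha : ∀ j, IsUnit (a j))
    (hx : ∀ j, x j ^ p = a (j + 1) * x (j + 1)) (hy : ∀ j, y j ^ p = a (j + 1) * y (j + 1))
    (h0 : x 0 = y 0) : x = y := by
  funext j
  induction j with
  | zero => exact h0
  | succ j ih => exact (ha (j + 1)).mul_left_cancel (by rw [← hx, ← hy, ih])

variable (p) in
noncomputable def invMulPowSeq {a : ℕ → M} (ha : ∀ j, IsUnit (a j)) (t : M) : ℕ → M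
  | 0 => t
  | j + 1 => ↑(ha (j + 1)).unit⁻¹ * invMulPowSeq ha t j ^ p

theorem invMulPowSeq_pow {a : ℕ → M} (ha : ∀ j, IsUnit (a j)) (t : M) (j : ℕ) :
    invMulPowSeq p ha t j ^ p = a (j + 1) * invMulPowSeq p ha t (j + 1) := by
  rw [invMulPowSeq, ← mul_assoc, IsUnit.mul_val_inv, one_mul]

end PowWeight

section Cyclic

open Fin.NatCast

variable {M : Type*} [CommMonoid M] {p n : ℕ}

abbrev cyclicConst (p : ℕ) (a : Fin n → M) : M := ∏ k : Fin n, a k ^ p ^ ((n - (k : ℕ)) % n)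

theorem map_cyclicConst {N F : Type*} [CommMonoid N] [FunLike F M N] [MonoidHomClass F M N]
    (f : F) (a : Fin n → M) : f (cyclicConst p a) = cyclicConst p (fun k => f (a k)) := by
  simp [cyclicConst]

variable [NeZero n]

theorem cyclicConst_eq_powWeight (a : Fin n → M) :
    cyclicConst p a = powWeight p (fun j => a j) n := by
  obtain ⟨m, rfl⟩ : ∃ m, n = m + 1 := Nat.exists_eq_add_one.2 (NeZero.pos n)
  have h := Fin.prod_univ_eq_prod_range (fun i : ℕ => a i ^ p ^ ((m + 1 - i) % (m + 1))) (m + 1)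
  simp only [Fin.cast_val_eq_self] at h
  rw [cyclicConst, h, Finset.prod_range_succ', powWeight_eq_prod, Finset.prod_range_succ]
  simp [Nat.mod_eq_of_lt (Nat.lt_succ_of_le (Nat.sub_le m _))]

theorem pow_natCast_eq_mul {a x : Fin n → M} (hx : ∀ k, x (k - 1) ^ p = a k * x k) (j : ℕ) :
    x j ^ p = a (j + 1 : ℕ) * x (j + 1 : ℕ) := by
  simpa using hx (j + 1 : ℕ)

theorem pow_pow_eq_cyclicConst_mul {a x : Fin n → M} (hx : ∀ k, x (k - 1) ^ p = a k * x k) :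
    x 0 ^ p ^ n = cyclicConst p a * x 0 := by
  simpa [cyclicConst_eq_powWeight] using
    (powWeight_mul_eq_pow_pow (x := fun j : ℕ => x j) (pow_natCast_eq_mul hx) n).symm

theorem cyclic_ext {a x y : Fin n → M} (ha : ∀ k, IsUnit (a k))
    (hx : ∀ k, x (k - 1) ^ p = a k * x k) (hy : ∀ k, y (k - 1) ^ p = a k * y k)
    (h0 : x 0 = y 0) : x = y := by
  have h := eq_of_pow_eq_mul (fun j => ha j) (pow_natCast_eq_mul hx) (pow_natCast_eq_mul hy)
    (by simpa using h0)
  funext k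
  simpa using congr_fun h k

theorem exists_cyclic_of_pow_pow_eq {a : Fin n → M} (ha : ∀ k, IsUnit (a k)) {t : M}
    (ht : t ^ p ^ n = cyclicConst p a * t) :
    ∃ y : Fin n → M, y 0 = t ∧ ∀ k, y (k - 1) ^ p = a k * y k := by
  set y := invMulPowSeq p (fun j => ha j) t
  have hy : ∀ j : ℕ, y j ^ p = a (j + 1 : ℕ) * y (j + 1) :=
    invMulPowSeq_pow (fun j => ha j) t
  have hper : y n = t := by
    refine (isUnit_powWeight p (fun j => ha j) n).mul_left_cancel ?_
    rw [powWeight_mul_eq_pow_pow hy, ← cyclicConst_eq_powWeight, ← ht]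
    rfl
  refine ⟨fun k => y k, rfl, fun k => ?_⟩
  obtain ⟨m, rfl⟩ : ∃ m, n = m + 1 := Nat.exists_eq_add_one.2 (NeZero.pos n)
  rcases eq_or_ne k 0 with rfl | hk
  · simpa [hper, show y 0 = t from rfl] using hy m
  · have hk1 : 1 ≤ (k : ℕ) := Nat.one_le_iff_ne_zero.2 (Fin.val_ne_zero_iff.2 hk)
    have h := hy (k - 1 : ℕ)
    rw [Nat.sub_add_cancel hk1, Fin.cast_val_eq_self] at h
    beta_reduce
    rwa [Fin.coe_sub_one, if_neg hk]

end Cyclic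

section Presentation

variable {R : Type*} [CommRing R] (p : ℕ) {n : ℕ} [NeZero n] (a : Fin n → R)

noncomputable abbrev cyclicIdeal : Ideal (MvPolynomial (Fin n) R) :=
  Ideal.span (Set.range fun k : Fin n => X (k - 1) ^ p - C (a k) * X k)

theorem mk_X_sub_one_pow (k : Fin n) :
    Ideal.Quotient.mk (cyclicIdeal p a) (X (k - 1)) ^ p =
      algebraMap R _ (a k) * Ideal.Quotient.mk (cyclicIdeal p a) (X k) := by
  rw [← map_pow, ← Ideal.Quotient.mk_algebraMap, ← map_mul, Ideal.Quotient.mk_eq_mk_iff_sub_mem]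
  exact Ideal.subset_span ⟨k, rfl⟩

variable {p a} {S : Type*} [CommRing S] [Algebra R S]

noncomputable def liftCyclic (y : Fin n → S)
    (hy : ∀ k, y (k - 1) ^ p = algebraMap R S (a k) * y k) :
    (MvPolynomial (Fin n) R ⧸ cyclicIdeal p a) →ₐ[R] S :=
  Ideal.Quotient.liftₐ _ (aeval y) fun _ hg =>
    (Ideal.span_le (I := RingHom.ker (aeval y)).2
      (Set.range_subset_iff.2 fun k => by simp [hy])) hg

@[simp]
theorem liftCyclic_mk_X (y : Fin n → S) (hy : ∀ k, y (k - 1) ^ p = algebraMap R S (a k) * y k)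
    (k : Fin n) : liftCyclic y hy (Ideal.Quotient.mk _ (X k)) = y k :=
  aeval_X y k

end Presentation

theorem AdjoinRoot.root_pow_eq_mul {R : Type*} [CommRing R] (m : ℕ) (c : R) :
    root (Polynomial.X ^ m - Polynomial.C c * Polynomial.X) ^ m =
      of _ c * root (Polynomial.X ^ m - Polynomial.C c * Polynomial.X) := by
  have := AdjoinRoot.eval₂_root (Polynomial.X ^ m - Polynomial.C c * Polynomial.X)
  simpa [sub_eq_zero] using this

theorem stmt8_general (R : Type*) [CommRing R] (p n : ℕ) [NeZero n]
    (a : Fin n → R) (ha : ∀ k, IsUnit (a k)) :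
    ∃ φ : (Polynomial R ⧸
            Ideal.span {Polynomial.X ^ p ^ n -
              Polynomial.C (∏ k : Fin n, a k ^ p ^ ((n - (k : ℕ)) % n)) * Polynomial.X})
          ≃ₐ[R]
          (MvPolynomial (Fin n) R ⧸
            Ideal.span (Set.range fun k : Fin n => (X (k - 1)) ^ p - C (a k) * X k)),
      φ (Ideal.Quotient.mk _ Polynomial.X) =
        Ideal.Quotient.mk
          (Ideal.span (Set.range fun k : Fin n => (X (k - 1)) ^ p - C (a k) * X k))
          (X 0) := by
  set f := Polynomial.X ^ p ^ n - Polynomial.C (cyclicConst p a) * Polynomial.X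
  set A := MvPolynomial (Fin n) R ⧸ cyclicIdeal p a
  set x : Fin n → A := fun k => Ideal.Quotient.mk _ (X k)
  have hx : ∀ k, x (k - 1) ^ p = algebraMap R A (a k) * x k := mk_X_sub_one_pow p a
  have hf : Polynomial.aeval (x 0) f = 0 := by
    rw [map_sub, map_mul, map_pow, Polynomial.aeval_X, Polynomial.aeval_C,
      pow_pow_eq_cyclicConst_mul hx, map_cyclicConst, sub_self]
  obtain ⟨y, hy0, hy⟩ :=
    exists_cyclic_of_pow_pow_eq (fun k => (ha k).map (algebraMap R (AdjoinRoot f)))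
      (by rw [← map_cyclicConst]; exact AdjoinRoot.root_pow_eq_mul _ _)
  let Φ := AdjoinRoot.liftAlgHom f (Algebra.ofId R A) (x 0) hf
  have hΦ : Φ (AdjoinRoot.root f) = x 0 := AdjoinRoot.liftAlgHom_root f _ _ hf
  -- `AdjoinRoot f` is by definition `R[X] ⧸ span {f}`.
  suffices Φ.comp (liftCyclic y hy) = AlgHom.id R A ∧
      (liftCyclic y hy).comp Φ = AlgHom.id R (AdjoinRoot f) from
    ⟨AlgEquiv.ofAlgHom Φ (liftCyclic y hy) this.1 this.2, hΦ⟩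
  constructor
  · have hΦy : (fun k => Φ (y k)) = x := by
      refine cyclic_ext (fun k => (ha k).map (algebraMap R A)) (fun k => ?_) hx ?_
      · rw [← map_pow, hy, map_mul, AlgHom.commutes]
      · exact (congrArg Φ hy0).trans hΦ
    refine Ideal.Quotient.algHom_ext R (MvPolynomial.algHom_ext fun k => ?_)
    exact (congrArg Φ (liftCyclic_mk_X y hy k)).trans (congr_fun hΦy k)
  · refine AdjoinRoot.algHom_ext ?_
    rw [AlgHom.comp_apply, hΦ, liftCyclic_mk_X, hy0]
    rfl

/-- When all `a_k` are invertible, with `c = a_0 · a_{n-1}^p ⋯ a_1^{p^{n-1}}`, the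
`R`-algebra homomorphism `R[t]/(t^{p^n} - c·t) → R[x_0,…,x_{n-1}]/(x_{k-1}^p - a_k x_k)`
sending `t` to `x_0` is an isomorphism. -/
theorem stmt8 (R : Type*) [CommRing R] (p n : ℕ) (hp : 2 ≤ p) [NeZero n]
    (a : Fin n → R) (ha : ∀ k, IsUnit (a k)) :
    ∃ φ : (Polynomial R ⧸
            Ideal.span {Polynomial.X ^ p ^ n -
              Polynomial.C (∏ k : Fin n, a k ^ p ^ ((n - (k : ℕ)) % n)) * Polynomial.X})
          ≃ₐ[R]
          (MvPolynomial (Fin n) R ⧸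
            Ideal.span (Set.range fun k : Fin n => (X (k - 1)) ^ p - C (a k) * X k)),
      φ (Ideal.Quotient.mk _ Polynomial.X) =
        Ideal.Quotient.mk
          (Ideal.span (Set.range fun k : Fin n => (X (k - 1)) ^ p - C (a k) * X k))
          (X 0) :=
  stmt8_general R p n a ha
end

section
/- Let R be a commutative ring, p ≥ 2, n ≥ 1, and a_0,...,a_{n−1} ∈ R. Then the elements x_0^p − a_1 x_1, x_1^p − a_2 x_2, ..., x_{n−1}^p − a_0 x_0 form a regular sequence in the polynomial ring R[x_0, ..., x_{n−1}]. -/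
/-!
Order monomials by `degLex`. As `p ≥ 2`, the leading monomial of
`g_k = x_k ^ p - a_{k+1} x_{k+1}` is `x_k ^ p`, so dividing by `g_0, …, g_{K-1}` rewrites any
polynomial, modulo the ideal `I_K` they generate and without raising its total degree, as a
*reduced* one: all exponents of `x_0, …, x_{K-1}` are `< p`.

The key step: if `q` is reduced for `K` and nonzero, then `g_K q` is congruent modulo `I_K` to
`h = x_K ^ p q - a_{K+1} s`, where `s` is the reduced form of `x_{K+1} q`. Then `h` is reduced
for `K`, and as `deg s ≤ deg q + 1 < deg q + p`, its coefficient at `x_K ^ p m`, for `m` a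
monomial of `q` of maximal degree, is that of `m` in `q`, hence nonzero. Only degrees are
compared, so the wrap-around relation `g_{n-1} = x_{n-1} ^ p - a_0 x_0` needs no special care.

By induction on `K`, this shows that `0` is the only reduced element of `I_K`. It then shows
that `g_K` is a nonzerodivisor modulo `I_K`, and since `1` is reduced, `I_n ≠ (1)`.
-/

open MvPolynomial MonomialOrder
open scoped MonomialOrder

namespace MvPolynomial

variable {σ R : Type*}

theorem degLex_degree_lt_of_totalDegree_lt [CommSemiring R] [LinearOrder σ] [WellFoundedGT σ]
    {f g : MvPolynomial σ R} (h : g.totalDegree < f.totalDegree) :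
    degLex.degree g ≺[degLex] degLex.degree f :=
  lt_of_not_ge fun hfg => (degLex_totalDegree_monotone hfg).not_gt h

theorem degLex_degree_C_mul_X_lt_X_pow [CommSemiring R] [Nontrivial R] [LinearOrder σ]
    [WellFoundedGT σ] {m : ℕ} (hm : 2 ≤ m) (c : R) (j k : σ) :
    degLex.degree (C c * X j) ≺[degLex] degLex.degree (X k ^ m : MvPolynomial σ R) := by
  apply degLex_degree_lt_of_totalDegree_lt
  calc (C c * X j : MvPolynomial σ R).totalDegree ≤ (X j : MvPolynomial σ R).totalDegree := by
        rw [← smul_eq_C_mul]; exact totalDegree_smul_le _ _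
    _ = 1 := totalDegree_X _
    _ < (X k ^ m : MvPolynomial σ R).totalDegree := by rw [totalDegree_X_pow]; omega

theorem exists_coeff_X_pow_mul_sub_ne_zero [CommRing R] {r s : MvPolynomial σ R} (hr : r ≠ 0)
    (k : σ) {m : ℕ} (hs : s.totalDegree < r.totalDegree + m) :
    ∃ d : σ →₀ ℕ, m ≤ d k ∧ coeff d (X k ^ m * r - s) ≠ 0 := by
  classical
  obtain ⟨d₀, hd₀, hdeg⟩ := Finset.exists_mem_eq_sup r.support (support_nonempty.mpr hr)
    fun d => d.degree
  refine ⟨d₀ + Finsupp.single k m, by simp, ?_⟩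
  have hX : coeff (d₀ + Finsupp.single k m) (X k ^ m * r) = coeff d₀ r := by
    rw [mul_comm, X_pow_eq_monomial, coeff_mul_monomial, mul_one]
  have hs : coeff (d₀ + Finsupp.single k m) s = 0 := by
    apply coeff_eq_zero_of_totalDegree_lt
    have : r.totalDegree = d₀.degree := hdeg
    rw [← Finsupp.degree_apply, map_add, Finsupp.degree_single]
    omega
  rwa [coeff_sub, hX, hs, sub_zero, ← mem_support_iff]

end MvPolynomial

namespace CyclicRelations

noncomputable section

variable {R : Type*} [CommRing R] (p : ℕ) {n : ℕ}

def rel [NeZero n] (a : Fin n → R) (k : Fin n) : MvPolynomial (Fin n) R :=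
  X k ^ p - C (a (k + 1)) * X (k + 1)

def relIdeal [NeZero n] (a : Fin n → R) (K : ℕ) : Ideal (MvPolynomial (Fin n) R) :=
  Ideal.ofList ((List.ofFn (rel p a)).take K)

def reducedSubmodule (K : ℕ) : Submodule R (MvPolynomial (Fin n) R) :=
  restrictSupport R {d | ∀ k : Fin n, (k : ℕ) < K → d k < p}

variable {p}

theorem mem_reducedSubmodule_iff {K : ℕ} {f : MvPolynomial (Fin n) R} :
    f ∈ reducedSubmodule p K ↔ ∀ d ∈ f.support, ∀ k : Fin n, (k : ℕ) < K → d k < p :=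
  Iff.rfl

theorem reducedSubmodule_antitone : Antitone (reducedSubmodule (R := R) (n := n) p) :=
  fun _ _ hKL => restrictSupport_mono R fun _ hd k hk => hd k (hk.trans_le hKL)

theorem one_mem_reducedSubmodule (hp : 0 < p) (K : ℕ) :
    (1 : MvPolynomial (Fin n) R) ∈ reducedSubmodule p K := by
  classical
  rw [mem_reducedSubmodule_iff]
  intro d hd k _
  rw [mem_support_iff, coeff_one, ite_ne_right_iff] at hd
  simp [← hd.1, hp]

theorem X_pow_mul_mem_reducedSubmodule {K : ℕ} {k : Fin n} (hk : K ≤ k) (m : ℕ)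
    {f : MvPolynomial (Fin n) R} (hf : f ∈ reducedSubmodule p K) :
    X k ^ m * f ∈ reducedSubmodule p K := by
  rw [mem_reducedSubmodule_iff] at hf ⊢
  intro d hd j hj
  rw [mem_support_iff, mul_comm, X_pow_eq_monomial, coeff_mul_monomial', ite_ne_right_iff,
    mul_one, ← mem_support_iff] at hd
  have hjk : k ≠ j := by rintro rfl; omega
  simpa [Finsupp.single_apply, hjk] using hf _ hd.2 j hj

variable [NeZero n] (a : Fin n → R)

theorem degLex_degree_rel [Nontrivial R] (hp : 2 ≤ p) (k : Fin n) :
    degLex.degree (rel p a k) = Finsupp.single k p := by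
  classical
  rw [rel, degree_sub_of_lt (degLex_degree_C_mul_X_lt_X_pow hp _ _ _), X_pow_eq_monomial]
  simp [degree_monomial]

theorem degLex_leadingCoeff_rel [Nontrivial R] (hp : 2 ≤ p) (k : Fin n) :
    degLex.leadingCoeff (rel p a k) = 1 := by
  rw [rel, leadingCoeff_sub_of_lt (degLex_degree_C_mul_X_lt_X_pow hp _ _ _), X_pow_eq_monomial,
    leadingCoeff_monomial]

theorem rel_mem_relIdeal {K : ℕ} {k : Fin n} (hk : (k : ℕ) < K) :
    rel p a k ∈ relIdeal p a K :=
  Ideal.subset_span (List.mem_take_iff_getElem.mpr ⟨k, by simp [hk], by simp⟩)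

theorem relIdeal_zero : relIdeal p a 0 = ⊥ := by
  simp [relIdeal]

theorem relIdeal_succ {K : ℕ} (hK : K < n) :
    relIdeal p a (K + 1) = relIdeal p a K ⊔ Ideal.span {rel p a ⟨K, hK⟩} := by
  simp [relIdeal, List.take_add_one, Ideal.ofList_append, hK]

theorem exists_reduced_sub_mem_relIdeal [Nontrivial R] (hp : 2 ≤ p) (K : ℕ)
    (f : MvPolynomial (Fin n) R) :
    ∃ r, f - r ∈ relIdeal p a K ∧ r ∈ reducedSubmodule p K ∧
      r.totalDegree ≤ f.totalDegree := by
  set b := fun k : {k : Fin n // (k : ℕ) < K} => rel p a k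
  obtain ⟨g, r, hfr, hdeg, hred⟩ := degLex.div (b := b)
    (fun k => by rw [degLex_leadingCoeff_rel a hp]; exact isUnit_one) f
  have hmem : Finsupp.linearCombination _ b g ∈ relIdeal p a K := by
    rw [Finsupp.linearCombination_apply]
    exact Ideal.sum_mem _ fun k _ => Ideal.mul_mem_left _ _ (rel_mem_relIdeal a k.2)
  have hdegL : (Finsupp.linearCombination _ b g).totalDegree ≤ f.totalDegree := by
    rw [Finsupp.linearCombination_apply]
    refine (totalDegree_finsetSum _ _).trans (Finset.sup_le fun k _ => ?_)
    simpa only [smul_eq_mul, mul_comm] using degLex_totalDegree_monotone (hdeg k)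
  refine ⟨r, by rwa [hfr, add_sub_cancel_right], fun d hd k hk => ?_, ?_⟩
  · have := hred d hd ⟨k, hk⟩
    rwa [degLex_degree_rel a hp, Finsupp.single_le_iff, not_le] at this
  · rw [eq_sub_of_add_eq' hfr.symm]
    exact (totalDegree_sub _ _).trans (max_le le_rfl hdegL)

theorem eq_zero_of_rel_mul_sub_mem [Nontrivial R] (hp : 2 ≤ p) (k : Fin n)
    (hI : ∀ g ∈ relIdeal p a k, g ∈ reducedSubmodule p k → g = 0)
    {f r : MvPolynomial (Fin n) R} (hf : f ∈ reducedSubmodule p (k + 1))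
    (hr : r ∈ reducedSubmodule p k) (hfr : rel p a k * r - f ∈ relIdeal p a k) : r = 0 := by
  by_contra hr0
  obtain ⟨s, hs, hs_red, hs_deg⟩ := exists_reduced_sub_mem_relIdeal a hp k (X (k + 1) * r)
  have hf_eq : X k ^ p * r - C (a (k + 1)) * s = f := by
    refine sub_eq_zero.mp (hI _ ?_ ?_)
    · have : X k ^ p * r - C (a (k + 1)) * s - f
          = (rel p a k * r - f) + C (a (k + 1)) * (X (k + 1) * r - s) := by
        rw [rel]; ring
      rw [this]
      exact add_mem hfr (Ideal.mul_mem_left _ _ hs)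
    · refine sub_mem (sub_mem (X_pow_mul_mem_reducedSubmodule le_rfl p hr) ?_)
        (reducedSubmodule_antitone (Nat.le_succ _) hf)
      rw [← smul_eq_C_mul]
      exact Submodule.smul_mem _ _ hs_red
  have hdeg : (C (a (k + 1)) * s).totalDegree < r.totalDegree + p := calc
    _ ≤ s.totalDegree := by rw [← smul_eq_C_mul]; exact totalDegree_smul_le _ _
    _ ≤ (X (k + 1) * r).totalDegree := hs_deg
    _ ≤ 1 + r.totalDegree := (totalDegree_mul _ _).trans (by rw [totalDegree_X])
    _ < r.totalDegree + p := by omega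
  obtain ⟨d, hdk, hd⟩ := exists_coeff_X_pow_mul_sub_ne_zero hr0 k hdeg
  rw [hf_eq, ← mem_support_iff] at hd
  exact (mem_reducedSubmodule_iff.mp hf d hd k (Nat.lt_succ_self _)).not_ge hdk

theorem eq_zero_of_mem_relIdeal_of_mem_reducedSubmodule [Nontrivial R] (hp : 2 ≤ p) {K : ℕ}
    (hK : K ≤ n) {f : MvPolynomial (Fin n) R} (hI : f ∈ relIdeal p a K)
    (hf : f ∈ reducedSubmodule p K) : f = 0 := by
  induction K generalizing f with
  | zero => simpa [relIdeal_zero] using hI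
  | succ K ih =>
    have ih' := @ih (by omega)
    set k : Fin n := ⟨K, hK⟩
    rw [relIdeal_succ a hK] at hI
    obtain ⟨w, hw, _, hv, rfl⟩ := Submodule.mem_sup.mp hI
    obtain ⟨q, rfl⟩ := Ideal.mem_span_singleton'.mp hv
    obtain ⟨r, hqr, hr, -⟩ := exists_reduced_sub_mem_relIdeal a hp K q
    have hr0 : r = 0 := by
      refine eq_zero_of_rel_mul_sub_mem a hp k (fun g => ih') hf hr ?_
      rw [show rel p a k * r - (w + q * rel p a k) = -(w + (q - r) * rel p a k) by ring]
      exact neg_mem (add_mem hw (Ideal.mul_mem_right _ _ hqr))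
    rw [hr0, sub_zero] at hqr
    exact ih' (add_mem hw (Ideal.mul_mem_right _ _ hqr)) (reducedSubmodule_antitone K.le_succ hf)

theorem mem_relIdeal_of_rel_mul_mem [Nontrivial R] (hp : 2 ≤ p) (k : Fin n)
    {f : MvPolynomial (Fin n) R} (h : rel p a k * f ∈ relIdeal p a k) : f ∈ relIdeal p a k := by
  obtain ⟨r, hfr, hr, -⟩ := exists_reduced_sub_mem_relIdeal a hp k f
  have hr0 : r = 0 := by
    refine eq_zero_of_rel_mul_sub_mem a hp k
      (fun g => eq_zero_of_mem_relIdeal_of_mem_reducedSubmodule a hp k.isLt.le) (zero_mem _) hr ?_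
    rw [sub_zero, show rel p a k * r = rel p a k * f - rel p a k * (f - r) by ring]
    exact sub_mem h (Ideal.mul_mem_left _ _ hfr)
  simpa [hr0] using hfr

end

end CyclicRelations

open CyclicRelations in
/-- The elements `x_0^p - a_1 x_1, x_1^p - a_2 x_2, …, x_{n-1}^p - a_0 x_0` form a regular
sequence in `R[x_0,…,x_{n-1}]`. -/
theorem stmt11 (R : Type*) [CommRing R] [Nontrivial R] (p n : ℕ) (hp : 2 ≤ p) [NeZero n]
    (a : Fin n → R) :
    RingTheory.Sequence.IsRegular (MvPolynomial (Fin n) R)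
      (List.ofFn fun k : Fin n => (X k : MvPolynomial (Fin n) R) ^ p - C (a (k + 1)) * X (k + 1)) := by
  change RingTheory.Sequence.IsRegular _ (List.ofFn (rel p a))
  have hsmul (K : ℕ) : (Ideal.ofList ((List.ofFn (rel p a)).take K) • ⊤ :
      Submodule (MvPolynomial (Fin n) R) (MvPolynomial (Fin n) R)) = relIdeal p a K := by
    rw [Ideal.smul_eq_mul, Ideal.mul_top, relIdeal]
  refine ⟨⟨fun i hi => ?_⟩, fun htop => ?_⟩
  · rw [hsmul, isSMulRegular_quotient_iff_mem_of_smul_mem, List.getElem_ofFn]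
    exact fun f => mem_relIdeal_of_rel_mul_mem a hp ⟨i, by simpa using hi⟩
  · have h1 : (1 : MvPolynomial (Fin n) R) ∈ relIdeal p a n := by
      rw [← hsmul, List.take_of_length_le (by simp), ← htop]
      exact Submodule.mem_top
    exact one_ne_zero (eq_zero_of_mem_relIdeal_of_mem_reducedSubmodule a hp le_rfl h1
      (one_mem_reducedSubmodule (by omega) n))
end

section
/- Let R be a commutative ring and 0 → G → F → H → 0 a short exact sequence of finite free R-modules, with rank G = g and rank H = h (so rank F = g + h). Then there is an isomorphism of R-modules Λ^g G ⊗_R Λ^h H → Λ^{g+h} F, defined by sending (x_1 ∧ ⋯ ∧ x_g) ⊗ (y_1 ∧ ⋯ ∧ y_h) to α(x_1) ∧ ⋯ ∧ α(x_g) ∧ ỹ_1 ∧ ⋯ ∧ ỹ_h, where α : G → F is the given injection and ỹ_j ∈ F is any lift of y_j ∈ H; this map is well defined (independent of the chosen lifts) and is an isomorphism. -/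
/-!
Choose a section `σ` of `β` (possible since `H` is projective), so that `α` on a basis of `G`
followed by `σ` on a basis of `H` is a basis of `F`. For a basis `b` of a free module of rank `n`,
`⋀ⁿ` is free of rank one on `ιMulti b`, with coordinate `b.det`; this identifies all three top
exterior powers with `R`, and `e` is the resulting composite. Its value on
`(x₁ ∧ ⋯ ∧ x_g) ⊗ (β y₁ ∧ ⋯ ∧ β y_h)` is `det x · det (β ∘ y)` times the basis wedge of `F`, which is
`α x₁ ∧ ⋯ ∧ α x_g ∧ σ β y₁ ∧ ⋯ ∧ σ β y_h`. The lifts `σ β yⱼ` may be replaced by `yⱼ`: they differ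
by elements of the image of `α`, and a wedge of `g + 1` elements of that image vanishes.
-/

open TensorProduct

namespace AlternatingMap
variable {R M N ι : Type*} [CommRing R] [AddCommGroup M] [AddCommGroup N] [Module R M] [Module R N]
  [Fintype ι] [DecidableEq ι]

theorem map_eq_basis_det_smul (f : M [⋀^ι]→ₗ[R] N) (e : Module.Basis ι R M) (v : ι → M) :
    f v = e.det v • f e := by
  suffices f = (LinearMap.toSpanSingleton R N (f e)).compAlternatingMap e.det from
    DFunLike.congr_fun this v
  refine Module.Basis.ext_alternating e fun i hi => ?_
  let σ : Equiv.Perm ι := Equiv.ofBijective i (Finite.injective_iff_bijective.1 hi)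
  change f (e ∘ σ) = ((LinearMap.toSpanSingleton R N (f e)).compAlternatingMap e.det) (e ∘ σ)
  simp [AlternatingMap.map_perm, Module.Basis.det_self, Units.smul_def]

end AlternatingMap

namespace Module.Basis
variable {R M : Type*} [CommRing R] [AddCommGroup M] [Module R M] {n : ℕ}

noncomputable def topExteriorPowerEquiv (b : Basis (Fin n) R M) : ⋀[R]^n M ≃ₗ[R] R :=
  LinearEquiv.ofLinearMap (exteriorPower.alternatingMapLinearEquiv b.det)
    (LinearMap.toSpanSingleton R _ (exteriorPower.ιMulti R n b))
    (LinearMap.ext_ring (by simp [b.det_self]))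
    (exteriorPower.linearMap_ext <| by
      ext v
      simp [(exteriorPower.ιMulti R n).map_eq_basis_det_smul b v, b.det_self])

@[simp]
theorem topExteriorPowerEquiv_ιMulti (b : Basis (Fin n) R M) (v : Fin n → M) :
    b.topExteriorPowerEquiv (exteriorPower.ιMulti R n v) = b.det v :=
  exteriorPower.alternatingMapLinearEquiv_apply_ιMulti _ v

@[simp]
theorem topExteriorPowerEquiv_symm_apply (b : Basis (Fin n) R M) (r : R) :
    b.topExteriorPowerEquiv.symm r = r • exteriorPower.ιMulti R n b := rfl

end Module.Basis

namespace ExteriorAlgebra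
variable {R M N : Type*} [CommRing R] [AddCommGroup M] [AddCommGroup N] [Module R M] [Module R N]

theorem ιMulti_append {i j : ℕ} (a : Fin i → M) (b : Fin j → M) :
    ιMulti R (i + j) (Fin.append a b) = ιMulti R i a * ιMulti R j b := by
  rw [ιMulti_apply, ιMulti_apply, ιMulti_apply, ← List.prod_append, ← List.ofFn_fin_append]
  congr 2
  ext k
  refine Fin.addCases (fun l => ?_) (fun r => ?_) k <;> simp

theorem ιMulti_eq_zero_of_card_lt {ι : Type*} [Fintype ι] (b : Module.Basis ι R M) {k : ℕ}
    (hk : Fintype.card ι < k) (v : Fin k → M) : ιMulti R k v = 0 := by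
  suffices ιMulti R k = 0 from DFunLike.congr_fun this v
  refine Module.Basis.ext_alternating b fun i hi => ?_
  have := Fintype.card_le_of_injective i hi
  simp only [Fintype.card_fin] at this
  omega

theorem ιMulti_mul_ι_eq_zero {n : ℕ} (b : Module.Basis (Fin n) R M) (x : Fin n → M) (z : M) :
    ιMulti R n x * ι R z = 0 := by
  have hz : ι R z = ιMulti R 1 ![z] := by simp [ιMulti_succ_apply, ιMulti_zero_apply]
  rw [hz, ← ιMulti_append, ιMulti_eq_zero_of_card_lt b (by simp)]

theorem mul_ιMulti_eq_of_sub_mem {S : Submodule R M} {A : ExteriorAlgebra R M}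
    (hA : ∀ s ∈ S, A * ι R s = 0) {k : ℕ} {y y' : Fin k → M} (hy : ∀ j, y j - y' j ∈ S) :
    A * ιMulti R k y = A * ιMulti R k y' := by
  induction k generalizing A with
  | zero => rw [Subsingleton.elim y y']
  | succ k ih =>
    have hA₀ : A * ι R (y 0) = A * ι R (y' 0) := by
      rw [← sub_eq_zero, ← mul_sub, ← map_sub, hA _ (hy 0)]
    rw [ιMulti_succ_apply, ιMulti_succ_apply, ← mul_assoc, ← mul_assoc, hA₀]
    refine ih (fun s hs => ?_) (fun j => hy j.succ)
    rw [mul_assoc, eq_neg_of_add_eq_zero_left (ι_add_mul_swap (y' 0) s), mul_neg, ← mul_assoc,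
      hA s hs, zero_mul, neg_zero]

/-- `α x₁ ∧ ⋯ ∧ α x_g` is a top-degree wedge in the image of `α`, so it kills every further factor
from that image. -/
theorem ιMulti_append_eq_of_comp_eq {G : Type*} [AddCommGroup G] [Module R G] {g h : ℕ}
    (b : Module.Basis (Fin g) R G) {α : G →ₗ[R] M} {β : M →ₗ[R] N}
    (hexact : LinearMap.range α = LinearMap.ker β) (x : Fin g → G) {y y' : Fin h → M}
    (hy : β ∘ y = β ∘ y') :
    ιMulti R (g + h) (Fin.append (α ∘ x) y) = ιMulti R (g + h) (Fin.append (α ∘ x) y') := by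
  rw [ιMulti_append, ιMulti_append]
  refine mul_ιMulti_eq_of_sub_mem (S := LinearMap.range α) ?_ fun j => ?_
  · rintro _ ⟨z, rfl⟩
    rw [← map_apply_ιMulti, ← map_apply_ι, ← map_mul, ιMulti_mul_ι_eq_zero b, map_zero]
  · rw [hexact, LinearMap.mem_ker, map_sub, sub_eq_zero]
    exact congrFun hy j

end ExteriorAlgebra

section SplitExact

variable {R G F H : Type*} [CommRing R] [AddCommGroup G] [AddCommGroup F] [AddCommGroup H]
  [Module R G] [Module R F] [Module R H] {g h : ℕ}

theorem exists_section_basis_eq_append [Module.Projective R H] {α : G →ₗ[R] F} {β : F →ₗ[R] H}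
    (hα : Function.Injective α) (hβ : Function.Surjective β)
    (hexact : LinearMap.range α = LinearMap.ker β)
    (bG : Module.Basis (Fin g) R G) (bH : Module.Basis (Fin h) R H) :
    ∃ (σ : H →ₗ[R] F) (bF : Module.Basis (Fin (g + h)) R F),
      β ∘ₗ σ = LinearMap.id ∧ ⇑bF = Fin.append (α ∘ bG) (σ ∘ bH) := by
  obtain ⟨σ, hσ⟩ := Module.projective_lifting_property β LinearMap.id hβ
  obtain ⟨e, hαe, hβe⟩ : ∃ e : F ≃ₗ[R] G × H,
      α = e.symm ∘ₗ LinearMap.inl R G H ∧ β = LinearMap.snd R G H ∘ₗ e :=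
    ⟨_, ((LinearMap.exact_iff.mpr hexact.symm).splitSurjectiveEquiv hα ⟨σ, hσ⟩).2⟩
  refine ⟨e.symm ∘ₗ LinearMap.inr R G H, ((bG.prod bH).reindex finSumFinEquiv).map e.symm,
    by rw [hβe]; ext; simp, funext fun i => ?_⟩
  refine Fin.addCases (fun i => ?_) (fun i => ?_) i <;> simp [hαe]

theorem ExteriorAlgebra.ιMulti_append_eq_det_mul_det_smul (bG : Module.Basis (Fin g) R G)
    (bH : Module.Basis (Fin h) R H) {α : G →ₗ[R] F} {β : F →ₗ[R] H} {σ : H →ₗ[R] F}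
    (hexact : LinearMap.range α = LinearMap.ker β) (hσ : β ∘ₗ σ = LinearMap.id)
    (x : Fin g → G) (y : Fin h → F) :
    ιMulti R (g + h) (Fin.append (α ∘ x) y) =
      (bG.det x * bH.det (β ∘ y)) • ιMulti R (g + h) (Fin.append (α ∘ bG) (σ ∘ bH)) := by
  have hlift : β ∘ y = β ∘ (σ ∘ (β ∘ y)) := by
    ext j; exact (LinearMap.congr_fun hσ (β (y j))).symm
  rw [ιMulti_append_eq_of_comp_eq bG hexact x hlift, ιMulti_append, ιMulti_append,
    ← map_apply_ιMulti α, ← map_apply_ιMulti σ, (ιMulti R g).map_eq_basis_det_smul bG x,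
    (ιMulti R h).map_eq_basis_det_smul bH (β ∘ y), map_smul, map_smul, smul_mul_smul_comm,
    map_apply_ιMulti, map_apply_ιMulti]

end SplitExact

theorem stmt15_general (R : Type*) [CommRing R]
    (G F H : Type*) [AddCommGroup G] [AddCommGroup F] [AddCommGroup H]
    [Module R G] [Module R F] [Module R H]
    [Module.Free R G] [Module.Free R H]
    [Module.Finite R G] [Module.Finite R H]
    (g h : ℕ) (hG : Module.finrank R G = g) (hH : Module.finrank R H = h)
    (α : G →ₗ[R] F) (β : F →ₗ[R] H)
    (hα : Function.Injective α) (hβ : Function.Surjective β)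
    (hexact : LinearMap.range α = LinearMap.ker β) :
    ∃ e : ((⋀[R]^g G) ⊗[R] (⋀[R]^h H)) ≃ₗ[R] (⋀[R]^(g + h) F),
      ∀ (x : Fin g → G) (y : Fin h → F)
        (hx : ExteriorAlgebra.ιMulti R g x ∈ ⋀[R]^g G)
        (hy : ExteriorAlgebra.ιMulti R h (β ∘ y) ∈ ⋀[R]^h H)
        (hxy : ExteriorAlgebra.ιMulti R (g + h) (Fin.append (α ∘ x) y) ∈ ⋀[R]^(g + h) F),
        e (⟨ExteriorAlgebra.ιMulti R g x, hx⟩ ⊗ₜ[R] ⟨ExteriorAlgebra.ιMulti R h (β ∘ y), hy⟩)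
          = ⟨ExteriorAlgebra.ιMulti R (g + h) (Fin.append (α ∘ x) y), hxy⟩ := by
  rcases subsingleton_or_nontrivial R with hR | hR
  · have := Module.subsingleton R ((⋀[R]^g G) ⊗[R] (⋀[R]^h H))
    have := Module.subsingleton R (⋀[R]^(g + h) F)
    exact ⟨LinearEquiv.ofSubsingleton _ _, fun _ _ _ _ _ => Subsingleton.elim _ _⟩
  let bG := Module.finBasisOfFinrankEq R G hG
  let bH := Module.finBasisOfFinrankEq R H hH
  obtain ⟨σ, bF, hσ, hbF⟩ := exists_section_basis_eq_append hα hβ hexact bG bH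
  let e := TensorProduct.congr bG.topExteriorPowerEquiv bH.topExteriorPowerEquiv ≪≫ₗ
    TensorProduct.lid R R ≪≫ₗ bF.topExteriorPowerEquiv.symm
  refine ⟨e, fun x y hx hy hxy => ?_⟩
  change e (exteriorPower.ιMulti R g x ⊗ₜ exteriorPower.ιMulti R h (β ∘ y)) =
    exteriorPower.ιMulti R (g + h) (Fin.append (α ∘ x) y)
  apply Subtype.ext
  simp [e, ExteriorAlgebra.ιMulti_append_eq_det_mul_det_smul bG bH hexact hσ x y, ← hbF]

/-- For a short exact sequence `0 → G → F → H → 0` of finite free modules with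
`rank G = g`, `rank H = h`, there is an isomorphism `Λ^g G ⊗ Λ^h H ≃ Λ^{g+h} F` sending
`(x_1 ∧ ⋯ ∧ x_g) ⊗ (y_1 ∧ ⋯ ∧ y_h)` to `α(x_1) ∧ ⋯ ∧ α(x_g) ∧ ỹ_1 ∧ ⋯ ∧ ỹ_h`, for any
choice of lifts `ỹ_j ∈ F` of the `y_j ∈ H` (in particular this is independent of the
lifts). -/
theorem stmt15 (R : Type*) [CommRing R]
    (G F H : Type*) [AddCommGroup G] [AddCommGroup F] [AddCommGroup H]
    [Module R G] [Module R F] [Module R H]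
    [Module.Free R G] [Module.Free R F] [Module.Free R H]
    [Module.Finite R G] [Module.Finite R F] [Module.Finite R H]
    (g h : ℕ) (hG : Module.finrank R G = g) (hH : Module.finrank R H = h)
    (α : G →ₗ[R] F) (β : F →ₗ[R] H)
    (hα : Function.Injective α) (hβ : Function.Surjective β)
    (hexact : LinearMap.range α = LinearMap.ker β) :
    ∃ e : ((⋀[R]^g G) ⊗[R] (⋀[R]^h H)) ≃ₗ[R] (⋀[R]^(g + h) F),
      ∀ (x : Fin g → G) (y : Fin h → F)
        (hx : ExteriorAlgebra.ιMulti R g x ∈ ⋀[R]^g G)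
        (hy : ExteriorAlgebra.ιMulti R h (β ∘ y) ∈ ⋀[R]^h H)
        (hxy : ExteriorAlgebra.ιMulti R (g + h) (Fin.append (α ∘ x) y) ∈ ⋀[R]^(g + h) F),
        e (⟨ExteriorAlgebra.ιMulti R g x, hx⟩ ⊗ₜ[R] ⟨ExteriorAlgebra.ιMulti R h (β ∘ y), hy⟩)
          = ⟨ExteriorAlgebra.ιMulti R (g + h) (Fin.append (α ∘ x) y), hxy⟩ :=
  stmt15_general R G F H g h hG hH α β hα hβ hexact
end
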